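/- arXiv:1605.05942 — 5 statements merged into one kernel-verified Lean document; each statement's English description precedes it below -/
import Mathlib

section
/- Let H be a connected hypergraph with rank k and a positive eigenvector x for ρ = ρ(A_H). Then ρ(A_H) ≤ max over edges {i1,…,is} ∈ E(H) with degrees d_{i1} ≥ ⋯ ≥ d_{is} of the quantity (d_{i1}^{k-s+1} d_{i2} ⋯ d_{is})^{1/k}. -/
open Finset

/-- The multiset of entries of an index tuple. -/
def idxMultiset {n k : ℕ} (idx : Fin k → Fin n) : Multiset (Fin n) := ↑(List.ofFn idx)

/-- Entries of the adjacency tensor of a general hypergraph with edge set `E` and rank `k`: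
`1/(k-1)!` on tuples that are permutations of an edge of size `k`;
`(k-s+1)!/k!` on tuples whose multiset is an edge of size `s < k` with one of its
vertices repeated `k-s+1` times; `0` otherwise. -/
noncomputable def adjEntry {R : Type*} [Field R] {n : ℕ} (k : ℕ)
    (E : Finset (Finset (Fin n))) (idx : Fin k → Fin n) : R :=
  ∑ e ∈ E,
    if e.card = k ∧ idxMultiset idx = e.val then 1 / (Nat.factorial (k - 1) : R)
    else if e.card < k ∧ ∃ j ∈ e, idxMultiset idx = e.val + Multiset.replicate (k - e.card) j then
      (Nat.factorial (k - e.card + 1) : R) / (Nat.factorial k : R)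
    else 0

/-- Full contraction `A x^k = ∑ a_{i₁…i_k} x_{i₁} ⋯ x_{i_k}`. -/
noncomputable def tFull {R : Type*} [CommRing R] {n : ℕ} (k : ℕ)
    (A : (Fin k → Fin n) → R) (x : Fin n → R) : R :=
  ∑ idx : Fin k → Fin n, A idx * ∏ j, x (idx j)

/-- `(A x^{k-1})_i = ∑_{i₂,…,i_k} a_{i i₂ … i_k} x_{i₂} ⋯ x_{i_k}`. -/
noncomputable def tApply {R : Type*} [CommRing R] {n : ℕ} (k : ℕ) [NeZero k]
    (A : (Fin k → Fin n) → R) (x : Fin n → R) (i : Fin n) : R :=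
  ∑ idx : Fin k → Fin n,
    if idx 0 = i then A idx * ∏ j ∈ Finset.univ.erase 0, x (idx j) else 0

/-- Degree of a vertex: the number of edges containing it. -/
def deg {n : ℕ} (E : Finset (Finset (Fin n))) (i : Fin n) : ℕ :=
  (E.filter (fun e => i ∈ e)).card

/-- `E` has rank `k`: all edges have size at most `k` and some edge has size `k`. -/
def HasRank {n : ℕ} (E : Finset (Finset (Fin n))) (k : ℕ) : Prop :=
  (∀ e ∈ E, e.card ≤ k) ∧ ∃ e ∈ E, e.card = k

/-- Connectedness of a hypergraph: any two vertices are joined by a sequence of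
vertices consecutively sharing an edge. -/
def Conn {n : ℕ} (E : Finset (Finset (Fin n))) : Prop :=
  ∀ u v : Fin n, Relation.ReflTransGen (fun a b => ∃ e ∈ E, a ∈ e ∧ b ∈ e) u v

/-- The spectral radius of a symmetric nonnegative tensor, via the variational
characterization `ρ(A) = max { x^T (A x^{k-1}) : x ≥ 0, ∑ xᵢ^k = 1 }`. -/
noncomputable def specRad {n : ℕ} (k : ℕ) (A : (Fin k → Fin n) → ℝ) : ℝ :=
  sSup {r : ℝ | ∃ x : Fin n → ℝ, (∀ i, 0 ≤ x i) ∧ ∑ i, x i ^ k = 1 ∧ r = tFull k A x}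

/-! Let `x > 0` be the Perron vector and choose a tuple `(i₁,…,i_k)` in the support of `A_H`
maximizing `P = x_{i₁} ⋯ x_{i_k}`. Every term of row `i` of the eigen-equation is then at most
`a_{i i₂…i_k} P`, and each edge through `i` contributes exactly `1` to the row sum of `A_H` at `i`,
so `ρ x_i^k ≤ d_i P`. Multiplying these inequalities over `i = i₁, …, i_k` gives
`ρ^k ≤ d_{i₁} ⋯ d_{i_k}`. The support tuple lists an edge `e` with one vertex repeated `k - |e| + 1`
times, and moving the repetition to a vertex of maximal degree in `e` only increases the product. -/

section TensorContraction

variable {n k : ℕ} [NeZero k]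

lemma mul_tApply_eq {R : Type*} [CommRing R] (A : (Fin k → Fin n) → R) (x : Fin n → R)
    (i : Fin n) :
    x i * tApply k A x i = ∑ idx : Fin k → Fin n with idx 0 = i, A idx * ∏ j, x (idx j) := by
  rw [tApply, ← sum_filter, mul_sum]
  refine sum_congr rfl fun idx hidx => ?_
  rw [← mul_prod_erase univ _ (mem_univ 0), (mem_filter.mp hidx).2]
  ring

lemma tApply_nonneg {A : (Fin k → Fin n) → ℝ} (hA : ∀ idx, 0 ≤ A idx) {x : Fin n → ℝ}
    (hx : ∀ i, 0 ≤ x i) (i : Fin n) : 0 ≤ tApply k A x i :=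
  sum_nonneg fun idx _ => by
    split_ifs
    · exact mul_nonneg (hA idx) (prod_nonneg fun j _ => hx _)
    · exact le_rfl

lemma mul_tApply_le {A : (Fin k → Fin n) → ℝ} (hA : ∀ idx, 0 ≤ A idx) {x : Fin n → ℝ} {P : ℝ}
    (hP : ∀ idx, A idx ≠ 0 → ∏ j, x (idx j) ≤ P) (i : Fin n) :
    x i * tApply k A x i ≤ (∑ idx : Fin k → Fin n with idx 0 = i, A idx) * P := by
  rw [mul_tApply_eq, sum_mul]
  refine sum_le_sum fun idx _ => ?_
  rcases eq_or_ne (A idx) 0 with h | h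
  · simp [h]
  · exact mul_le_mul_of_nonneg_left (hP idx h) (hA idx)

end TensorContraction

lemma pow_le_prod_of_mul_pow_le {n k : ℕ} {ρ : ℝ} (hρ : 0 ≤ ρ) {x d : Fin n → ℝ}
    (hx : ∀ i, 0 < x i) (idx : Fin k → Fin n) (h : ∀ i, ρ * x i ^ k ≤ d i * ∏ j, x (idx j)) :
    ρ ^ k ≤ ∏ j, d (idx j) := by
  have hprod := prod_le_prod (s := univ) (fun j _ => by have := hx (idx j); positivity)
    (fun j _ => h (idx j))
  rw [prod_mul_distrib, prod_mul_distrib, prod_const, prod_const, card_univ, Fintype.card_fin,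
    prod_pow] at hprod
  exact le_of_mul_le_mul_right hprod (pow_pos (prod_pos fun j _ => hx _) k)

lemma prod_map_add_replicate_le {α : Type*} [DecidableEq α] {f : α → ℝ} (hf : ∀ a, 0 ≤ f a)
    {e : Finset α} {j j₁ : α} (hj : j ∈ e) (hj₁ : j₁ ∈ e) (hmax : ∀ v ∈ e, f v ≤ f j₁) (r : ℕ) :
    ((e.val + Multiset.replicate r j).map f).prod ≤ f j₁ ^ (r + 1) * ∏ v ∈ e.erase j₁, f v := by
  rw [Multiset.map_add, Multiset.prod_add, Multiset.map_replicate, Multiset.prod_replicate,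
    ← prod_eq_multiset_prod, ← mul_prod_erase e f hj₁]
  calc f j₁ * (∏ v ∈ e.erase j₁, f v) * f j ^ r
      ≤ f j₁ * (∏ v ∈ e.erase j₁, f v) * f j₁ ^ r :=
        mul_le_mul_of_nonneg_left (pow_le_pow_left₀ (hf j) (hmax j hj) r)
          (mul_nonneg (hf j₁) (prod_nonneg fun v _ => hf v))
    _ = f j₁ ^ (r + 1) * ∏ v ∈ e.erase j₁, f v := by ring

namespace AdjTensor

open scoped Nat

variable {n : ℕ}

lemma idxMultiset_succ {m : ℕ} (idx : Fin (m + 1) → Fin n) :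
    idxMultiset idx = idx 0 ::ₘ idxMultiset (Fin.tail idx) := by
  rw [idxMultiset, List.ofFn_succ]
  rfl

def tupleCount (k : ℕ) (M : Multiset (Fin n)) : ℕ :=
  #{idx : Fin k → Fin n | idxMultiset idx = M}

lemma card_filter_head_eq (m : ℕ) (i : Fin n) (M : Multiset (Fin n)) :
    #{idx : Fin (m + 1) → Fin n | idx 0 = i ∧ idxMultiset idx = M}
      = if i ∈ M then tupleCount m (M.erase i) else 0 := by
  split_ifs with hi
  · refine card_bij' (fun idx _ => Fin.tail idx) (fun g _ => Fin.cons i g) ?_ ?_ ?_ ?_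
    · intro idx hidx
      simp only [mem_filter, mem_univ, true_and] at hidx ⊢
      rw [← hidx.2, idxMultiset_succ, hidx.1, Multiset.erase_cons_head]
    · intro g hg
      simp only [mem_filter, mem_univ, true_and] at hg ⊢
      rw [idxMultiset_succ, Fin.cons_zero, Fin.tail_cons, hg, Multiset.cons_erase hi]
      exact ⟨rfl, rfl⟩
    · intro idx hidx
      rw [← (mem_filter.mp hidx).2.1]
      exact Fin.cons_self_tail idx
    · intro g _
      exact Fin.tail_cons (α := fun _ => Fin n) i g
  · refine card_eq_zero.mpr (filter_eq_empty_iff.mpr ?_)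
    rintro idx - ⟨rfl, rfl⟩
    exact hi (idxMultiset_succ idx ▸ Multiset.mem_cons_self _ _)

lemma tupleCount_succ (m : ℕ) (M : Multiset (Fin n)) :
    tupleCount (m + 1) M = ∑ i : Fin n, if i ∈ M then tupleCount m (M.erase i) else 0 := by
  rw [tupleCount, card_eq_sum_card_fiberwise (f := fun idx => idx 0) (t := univ)
    (fun _ _ => mem_univ _)]
  refine sum_congr rfl fun i _ => ?_
  rw [filter_filter, ← card_filter_head_eq]
  simp_rw [and_comm]

lemma prod_factorial_count_cons (a : Fin n) (M : Multiset (Fin n)) :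
    ∏ b, ((a ::ₘ M).count b)! = (M.count a + 1) * ∏ b, (M.count b)! := by
  rw [← mul_prod_erase univ _ (mem_univ a), ← mul_prod_erase univ (fun b => (M.count b)!)
    (mem_univ a), Multiset.count_cons_self, Nat.factorial_succ, mul_assoc]
  congr 2
  refine prod_congr rfl fun b hb => ?_
  rw [Multiset.count_cons_of_ne (ne_of_mem_erase hb)]

lemma prod_factorial_count_of_mem {i : Fin n} {M : Multiset (Fin n)} (hi : i ∈ M) :
    ∏ b, (M.count b)! = M.count i * ∏ b, ((M.erase i).count b)! := by
  have h := prod_factorial_count_cons i (M.erase i)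
  rwa [← Multiset.count_cons_self, Multiset.cons_erase hi] at h

lemma tupleCount_mul_prod_factorial {m : ℕ} {M : Multiset (Fin n)} (hM : Multiset.card M = m) :
    tupleCount m M * ∏ b, (M.count b)! = m ! := by
  induction m generalizing M with
  | zero =>
    rw [Multiset.card_eq_zero.mp hM]
    simp [tupleCount, idxMultiset]
  | succ m ih =>
    have hterm : ∀ i : Fin n, (if i ∈ M then tupleCount m (M.erase i) else 0)
        * ∏ b, (M.count b)! = m ! * M.count i := by
      intro i
      split_ifs with hi
      · rw [prod_factorial_count_of_mem hi, mul_left_comm,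
          ih (by rw [Multiset.card_erase_of_mem hi, hM]; rfl), mul_comm]
      · rw [Multiset.count_eq_zero_of_notMem hi]; simp
    rw [tupleCount_succ, sum_mul, sum_congr rfl fun i _ => hterm i, ← mul_sum,
      Multiset.sum_count_eq_card fun a _ => mem_univ a, hM, Nat.factorial_succ, mul_comm]

lemma card_filter_head_mul_prod_factorial {m : ℕ} {M : Multiset (Fin n)}
    (hM : Multiset.card M = m + 1) (i : Fin n) :
    #{idx : Fin (m + 1) → Fin n | idx 0 = i ∧ idxMultiset idx = M} * ∏ b, (M.count b)!
      = m ! * M.count i := by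
  rw [card_filter_head_eq]
  split_ifs with hi
  · rw [prod_factorial_count_of_mem hi, mul_left_comm,
      tupleCount_mul_prod_factorial (by rw [Multiset.card_erase_of_mem hi, hM]; rfl), mul_comm]
  · rw [Multiset.count_eq_zero_of_notMem hi]; simp

lemma prod_factorial_count_add_replicate {e : Finset (Fin n)} {j : Fin n} (hj : j ∈ e) (r : ℕ) :
    ∏ b, ((e.val + Multiset.replicate r j).count b)! = (r + 1)! := by
  have hcount : ∀ b, (e.val + Multiset.replicate r j).count b
      = (if b ∈ e then 1 else 0) + if j = b then r else 0 := fun b => by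
    simp only [Multiset.count_add, Multiset.count_replicate,
      Multiset.count_eq_of_nodup e.nodup, mem_val]
  rw [prod_eq_single j (fun b _ hb => by simp [hcount, Ne.symm hb, apply_ite])
    (by simp), hcount, if_pos hj, if_pos rfl, add_comm]

lemma sum_count_add_replicate (e : Finset (Fin n)) (r : ℕ) (i : Fin n) :
    ∑ j ∈ e, (e.val + Multiset.replicate r j).count i = (e.card + r) * e.val.count i := by
  simp only [Multiset.count_add, Multiset.count_replicate, sum_add_distrib, sum_const,
    smul_eq_mul, sum_ite_eq', Multiset.count_eq_of_nodup e.nodup, mem_val]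
  split_ifs <;> ring

lemma deg_eq_sum_count (E : Finset (Finset (Fin n))) (i : Fin n) :
    deg E i = ∑ e ∈ E, e.val.count i := by
  simp only [deg, card_filter, Multiset.count_eq_of_nodup (Finset.nodup _), mem_val]

noncomputable def edgeEntry (k : ℕ) (e : Finset (Fin n)) (idx : Fin k → Fin n) : ℝ :=
  if e.card = k ∧ idxMultiset idx = e.val then 1 / ((k - 1)! : ℝ)
  else if e.card < k ∧ ∃ j ∈ e, idxMultiset idx = e.val + Multiset.replicate (k - e.card) j then
    ((k - e.card + 1)! : ℝ) / (k ! : ℝ)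
  else 0

lemma adjEntry_eq_sum_edgeEntry (k : ℕ) (E : Finset (Finset (Fin n))) (idx : Fin k → Fin n) :
    adjEntry k E idx = ∑ e ∈ E, edgeEntry k e idx :=
  rfl

lemma edgeEntry_nonneg (k : ℕ) (e : Finset (Fin n)) (idx : Fin k → Fin n) :
    0 ≤ edgeEntry k e idx := by
  unfold edgeEntry
  split_ifs <;> positivity

lemma adjEntry_nonneg (k : ℕ) (E : Finset (Finset (Fin n))) (idx : Fin k → Fin n) :
    0 ≤ (adjEntry k E idx : ℝ) :=
  sum_nonneg fun e _ => edgeEntry_nonneg k e idx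

lemma card_filter_head_add_replicate_mul {e : Finset (Fin n)} {j : Fin n} (hj : j ∈ e)
    {m r : ℕ} (hcard : e.card + r = m + 1) (i : Fin n) :
    (#{idx : Fin (m + 1) → Fin n | idx 0 = i ∧ idxMultiset idx = e.val + Multiset.replicate r j}
      : ℝ) * (r + 1)! = m ! * (e.val + Multiset.replicate r j).count i := by
  rw [← prod_factorial_count_add_replicate hj r]
  exact_mod_cast card_filter_head_mul_prod_factorial (by simpa using hcard) i

lemma sum_edgeEntry_head_of_card_eq {m : ℕ} {e : Finset (Fin n)} (he : e.card = m + 1)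
    (i : Fin n) :
    ∑ idx : Fin (m + 1) → Fin n with idx 0 = i, edgeEntry (m + 1) e idx = e.val.count i := by
  obtain ⟨j, hj⟩ := card_pos.mp (by rw [he]; exact m.succ_pos)
  have hcount := card_filter_head_add_replicate_mul hj (r := 0) he i
  simp only [Multiset.replicate_zero, add_zero, zero_add, Nat.factorial_one, Nat.cast_one,
    mul_one] at hcount
  have hentry : ∀ idx : Fin (m + 1) → Fin n,
      edgeEntry (m + 1) e idx = if idxMultiset idx = e.val then 1 / (m ! : ℝ) else 0 := by
    intro idx
    simp [edgeEntry, he]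
  simp_rw [hentry]
  rw [sum_ite, sum_const_zero, add_zero, sum_const, filter_filter, nsmul_eq_mul, hcount]
  field_simp

lemma sum_edgeEntry_head_le_of_card_lt {m : ℕ} {e : Finset (Fin n)} (he : e.card < m + 1)
    (i : Fin n) :
    ∑ idx : Fin (m + 1) → Fin n with idx 0 = i, edgeEntry (m + 1) e idx ≤ e.val.count i := by
  set r := m + 1 - e.card
  have hcard : e.card + r = m + 1 := by omega
  set w : ℝ := (r + 1)! / (m + 1)!
  have hentry : ∀ idx : Fin (m + 1) → Fin n, edgeEntry (m + 1) e idx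
      ≤ ∑ j ∈ e, if idxMultiset idx = e.val + Multiset.replicate r j then w else 0 := by
    intro idx
    simp only [edgeEntry, he.ne, he, true_and, false_and, if_false]
    split_ifs with h
    · obtain ⟨j, hj, hms⟩ := h
      refine le_of_eq_of_le ?_ (single_le_sum (fun j _ => ?_) hj)
      · simp [hms, w, r]
      · split_ifs <;> positivity
    · exact sum_nonneg fun _ _ => by split_ifs <;> positivity
  calc ∑ idx : Fin (m + 1) → Fin n with idx 0 = i, edgeEntry (m + 1) e idx
      ≤ ∑ idx : Fin (m + 1) → Fin n with idx 0 = i,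
          ∑ j ∈ e, if idxMultiset idx = e.val + Multiset.replicate r j then w else 0 :=
        sum_le_sum fun idx _ => hentry idx
    _ = ∑ j ∈ e, (#{idx : Fin (m + 1) → Fin n |
          idx 0 = i ∧ idxMultiset idx = e.val + Multiset.replicate r j} : ℝ) * w := by
        rw [sum_comm]
        simp_rw [sum_ite, sum_const_zero, add_zero, sum_const, filter_filter, nsmul_eq_mul]
    _ = ∑ j ∈ e, ((e.val + Multiset.replicate r j).count i : ℝ) / (m + 1) := by
        refine sum_congr rfl fun j hj => ?_
        rw [mul_div, card_filter_head_add_replicate_mul hj hcard, Nat.factorial_succ]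
        push_cast
        field_simp
    _ = e.val.count i := by
        rw [← sum_div, ← Nat.cast_sum, sum_count_add_replicate, hcard]
        push_cast
        field_simp

lemma sum_adjEntry_head_le_deg {m : ℕ} {E : Finset (Finset (Fin n))}
    (hrank : ∀ e ∈ E, e.card ≤ m + 1) (i : Fin n) :
    ∑ idx : Fin (m + 1) → Fin n with idx 0 = i, (adjEntry (m + 1) E idx : ℝ) ≤ deg E i := by
  simp_rw [adjEntry_eq_sum_edgeEntry]
  rw [sum_comm, deg_eq_sum_count, Nat.cast_sum]
  refine sum_le_sum fun e he => ?_
  rcases (hrank e he).lt_or_eq with hlt | heq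
  · exact sum_edgeEntry_head_le_of_card_lt hlt i
  · exact (sum_edgeEntry_head_of_card_eq heq i).le

lemma mul_pow_le_deg_mul {m : ℕ} {E : Finset (Finset (Fin n))}
    (hrank : ∀ e ∈ E, e.card ≤ m + 1) {x : Fin n → ℝ} {ρ P : ℝ}
    (heig : ∀ i, tApply (m + 1) (adjEntry (m + 1) E) x i = ρ * x i ^ m)
    (hP : ∀ idx, (adjEntry (m + 1) E idx : ℝ) ≠ 0 → ∏ j, x (idx j) ≤ P) (hP₀ : 0 ≤ P)
    (i : Fin n) :
    ρ * x i ^ (m + 1) ≤ deg E i * P :=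
  calc ρ * x i ^ (m + 1) = x i * tApply (m + 1) (adjEntry (m + 1) E) x i := by
        rw [heig]; ring
    _ ≤ (∑ idx : Fin (m + 1) → Fin n with idx 0 = i, adjEntry (m + 1) E idx) * P :=
        mul_tApply_le (adjEntry_nonneg (m + 1) E) hP i
    _ ≤ deg E i * P := mul_le_mul_of_nonneg_right (sum_adjEntry_head_le_deg hrank i) hP₀

lemma exists_idxMultiset_eq_add_replicate {k : ℕ} [NeZero k] {E : Finset (Finset (Fin n))}
    {idx : Fin k → Fin n} (h : (adjEntry k E idx : ℝ) ≠ 0) :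
    ∃ e ∈ E, ∃ j ∈ e, idxMultiset idx = e.val + Multiset.replicate (k - e.card) j := by
  rw [adjEntry_eq_sum_edgeEntry] at h
  obtain ⟨e, he, hne⟩ := exists_ne_zero_of_sum_ne_zero h
  refine ⟨e, he, ?_⟩
  unfold edgeEntry at hne
  split_ifs at hne with hfull hsmall
  · obtain ⟨j, hj⟩ := card_pos.mp (by rw [hfull.1]; exact NeZero.pos k)
    exact ⟨j, hj, by simp [hfull.1, hfull.2]⟩
  · exact hsmall.2
  · exact absurd rfl hne

lemma exists_adjEntry_pos {k : ℕ} {E : Finset (Finset (Fin n))} (hE : ∃ e ∈ E, e.card = k) :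
    ∃ idx : Fin k → Fin n, 0 < (adjEntry k E idx : ℝ) := by
  obtain ⟨e, he, hcard⟩ := hE
  have hcount := tupleCount_mul_prod_factorial (M := e.val) hcard
  have hpos : 0 < tupleCount k e.val :=
    Nat.pos_of_ne_zero fun h0 => k.factorial_ne_zero (by rw [← hcount, h0, zero_mul])
  obtain ⟨idx, hidx⟩ := card_pos.mp hpos
  refine ⟨idx, lt_of_lt_of_le ?_ (single_le_sum (fun e _ => edgeEntry_nonneg k e idx) he)⟩
  simp only [edgeEntry, hcard, (mem_filter.mp hidx).2, and_self, if_true]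
  positivity

lemma prod_eq_prod_map_idxMultiset {M : Type*} [CommMonoid M] {k : ℕ} (idx : Fin k → Fin n)
    (f : Fin n → M) :
    ∏ j, f (idx j) = ((idxMultiset idx).map f).prod := by
  simp [idxMultiset, List.prod_ofFn]

end AdjTensor

open AdjTensor

theorem stmt6_general {n k : ℕ} [NeZero k] (E : Finset (Finset (Fin n)))
    (hrank : HasRank E k)
    (x : Fin n → ℝ) (hx : ∀ i, 0 < x i)
    (heig : ∀ i, tApply k (adjEntry k E) x i = specRad k (adjEntry k E) * x i ^ (k - 1)) :
    ∃ e ∈ E, ∃ j1 ∈ e, (∀ v ∈ e, deg E v ≤ deg E j1) ∧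
      specRad k (adjEntry k E) ≤
        ((deg E j1 : ℝ) ^ (k - e.card + 1) * ∏ v ∈ e.erase j1, (deg E v : ℝ))
          ^ (1 / (k : ℝ)) := by
  obtain ⟨m, rfl⟩ := Nat.exists_eq_add_one_of_ne_zero (NeZero.ne k)
  set ρ := specRad (m + 1) (adjEntry (m + 1) E)
  obtain ⟨idx₁, hidx₁⟩ := exists_adjEntry_pos hrank.2
  obtain ⟨idx₀, hidx₀, hmax⟩ := exists_max_image {idx | (adjEntry (m + 1) E idx : ℝ) ≠ 0}
    (fun idx => ∏ j, x (idx j)) ⟨idx₁, by simpa using hidx₁.ne'⟩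
  have hρ : 0 ≤ ρ := by
    have h := tApply_nonneg (adjEntry_nonneg (m + 1) E) (fun i => (hx i).le) (idx₀ 0)
    rw [heig] at h
    exact nonneg_of_mul_nonneg_left h (pow_pos (hx _) _)
  have hrow : ∀ i, ρ * x i ^ (m + 1) ≤ deg E i * ∏ j, x (idx₀ j) :=
    mul_pow_le_deg_mul hrank.1 (fun i => by simpa using heig i)
      (fun idx h => hmax idx (by simpa using h)) (prod_nonneg fun j _ => (hx _).le)
  obtain ⟨e, he, j, hj, hms⟩ := exists_idxMultiset_eq_add_replicate (mem_filter.mp hidx₀).2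
  obtain ⟨j₁, hj₁, hj₁max⟩ := e.exists_max_image (deg E) ⟨j, hj⟩
  refine ⟨e, he, j₁, hj₁, hj₁max, ?_⟩
  have hpow := calc
    ρ ^ (m + 1) ≤ ∏ j, (deg E (idx₀ j) : ℝ) := pow_le_prod_of_mul_pow_le hρ hx idx₀ hrow
    _ = ((e.val + Multiset.replicate (m + 1 - e.card) j).map (deg E · : Fin n → ℝ)).prod := by
        rw [prod_eq_prod_map_idxMultiset idx₀ (fun v => (deg E v : ℝ)), hms]
    _ ≤ _ := prod_map_add_replicate_le (fun _ => Nat.cast_nonneg _) hj hj₁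
        (fun v hv => Nat.cast_le.mpr (hj₁max v hv)) _
  rw [one_div, ← Real.pow_rpow_inv_natCast hρ (m.succ_ne_zero)]
  exact Real.rpow_le_rpow (by positivity) hpow (by positivity)

/-- `ρ(A_H) ≤ max { (d_{i₁}^{k-s+1} d_{i₂} ⋯ d_{i_s})^{1/k} :
{i₁,…,i_s} ∈ E(H), d_{i₁} ≥ ⋯ ≥ d_{i_s} }` for a connected hypergraph of rank `k`
with positive Perron vector. -/
theorem stmt6 {n k : ℕ} [NeZero k] (E : Finset (Finset (Fin n)))
    (hE : ∀ e ∈ E, e.Nonempty) (hconn : Conn E) (hrank : HasRank E k)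
    (x : Fin n → ℝ) (hx : ∀ i, 0 < x i)
    (heig : ∀ i, tApply k (adjEntry k E) x i = specRad k (adjEntry k E) * x i ^ (k - 1)) :
    ∃ e ∈ E, ∃ j1 ∈ e, (∀ v ∈ e, deg E v ≤ deg E j1) ∧
      specRad k (adjEntry k E) ≤
        ((deg E j1 : ℝ) ^ (k - e.card + 1) * ∏ v ∈ e.erase j1, (deg E v : ℝ))
          ^ (1 / (k : ℝ)) :=
  stmt6_general E hrank x hx heig
end

section
/- Let H be a connected k-uniform hypergraph with a positive Perron eigenvector for ρ(A_H). Then ρ(A_H) ≤ max_{{i1,…,ik} ∈ E(H)} (d_{i1} d_{i2} ⋯ d_{ik})^{1/k}, i.e., the spectral radius is at most the maximum geometric mean of the degrees over an edge. -/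
open Finset

/-!
Write `k = m + 1` and `P(e) = ∏_{v ∈ e} x_v`. Since `A_H` puts weight `1/m!` on each of the `m!`
orderings of an edge that start with `i`, the eigenvalue equation reads `ρ x_i^k = ∑_{e ∋ i} P(e)`.
Let `e*` maximise `P`. For `i ∈ e*` this gives `ρ x_i^k ≤ d_i P(e*)`, and multiplying over the `k`
vertices of `e*` yields `ρ^k P(e*)^k ≤ (∏_{i ∈ e*} d_i) P(e*)^k`.
-/

section idxMultiset

variable {n m : ℕ}

lemma mem_of_idxMultiset_eq {idx : Fin m → Fin n} {f : Finset (Fin n)}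
    (h : idxMultiset idx = f.val) (j : Fin m) : idx j ∈ f := by
  rw [← Finset.mem_val, ← h]
  exact List.mem_ofFn.mpr ⟨j, rfl⟩

lemma injective_of_idxMultiset_eq {idx : Fin m → Fin n} {f : Finset (Fin n)}
    (h : idxMultiset idx = f.val) : Function.Injective idx := by
  rw [← List.nodup_ofFn, ← Multiset.coe_nodup]
  have hnodup := f.nodup
  rwa [← h] at hnodup

lemma idxMultiset_eq_of_injective {idx : Fin m → Fin n} {f : Finset (Fin n)} (hf : f.card = m)
    (hinj : Function.Injective idx) (hmem : ∀ j, idx j ∈ f) : idxMultiset idx = f.val := by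
  have hnodup : (idxMultiset idx).Nodup := Multiset.coe_nodup.mpr (List.nodup_ofFn.mpr hinj)
  refine Multiset.eq_of_le_of_card_le ((Multiset.le_iff_subset hnodup).mpr fun a ha => ?_) ?_
  · obtain ⟨j, rfl⟩ := List.mem_ofFn.mp ha
    exact hmem j
  · simp [idxMultiset, hf]

lemma idxMultiset_cons (a : Fin n) (y : Fin m → Fin n) :
    idxMultiset (Fin.cons a y : Fin (m + 1) → Fin n) = a ::ₘ idxMultiset y := by
  simp [idxMultiset, List.ofFn_succ]

lemma prod_comp_eq_prod_of_idxMultiset_eq {M : Type*} [CommMonoid M] {idx : Fin m → Fin n}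
    {e : Finset (Fin n)} (h : idxMultiset idx = e.val) (x : Fin n → M) :
    ∏ j, x (idx j) = ∏ v ∈ e, x v := by
  rw [Finset.prod_eq_multiset_prod e x, ← h, idxMultiset, Multiset.map_coe, Multiset.prod_coe,
    List.map_ofFn, List.prod_ofFn]
  rfl

def idxMultisetEqEquivEmbedding {f : Finset (Fin n)} (hf : f.card = m) :
    {idx : Fin m → Fin n // idxMultiset idx = f.val} ≃ (Fin m ↪ f) where
  toFun p := ⟨fun j => ⟨p.1 j, mem_of_idxMultiset_eq p.2 j⟩,
    fun _ _ hab => injective_of_idxMultiset_eq p.2 (congrArg Subtype.val hab)⟩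
  invFun g := ⟨fun j => g j, idxMultiset_eq_of_injective hf
    (Subtype.val_injective.comp g.injective) fun j => (g j).2⟩
  left_inv _ := rfl
  right_inv _ := rfl

lemma card_filter_idxMultiset_eq {f : Finset (Fin n)} (hf : f.card = m) :
    #{idx : Fin m → Fin n | idxMultiset idx = f.val} = m.factorial := by
  rw [← Fintype.card_subtype, Fintype.card_congr (idxMultisetEqEquivEmbedding hf),
    Fintype.card_embedding_eq, Fintype.card_coe, hf, Fintype.card_fin, Nat.descFactorial_self]

lemma card_filter_head_idxMultiset_eq {e : Finset (Fin n)} (he : e.card = m + 1) {i : Fin n}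
    (hi : i ∈ e) :
    #{idx : Fin (m + 1) → Fin n | idx 0 = i ∧ idxMultiset idx = e.val} = m.factorial := by
  have hcons : ∀ y : Fin m → Fin n, idxMultiset (Fin.cons i y : Fin (m + 1) → Fin n) = e.val ↔
      idxMultiset y = (e.erase i).val := by
    intro y
    rw [idxMultiset_cons, ← Multiset.cons_erase (Finset.mem_val.mpr hi), Finset.erase_val,
      Multiset.cons_inj_right]
  rw [← card_filter_idxMultiset_eq (f := e.erase i) (by rw [card_erase_of_mem hi, he]; rfl)]
  refine card_nbij' Fin.tail (fun y => Fin.cons i y) ?_ ?_ ?_ ?_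
  · rintro idx hidx
    simp only [coe_filter, mem_univ, true_and, Set.mem_ofPred_eq] at hidx ⊢
    rw [← hcons, ← hidx.1, Fin.cons_self_tail]
    exact hidx.2
  · rintro y hy
    simp only [coe_filter, mem_univ, true_and, Set.mem_ofPred_eq] at hy ⊢
    exact ⟨Fin.cons_zero _ _, (hcons y).mpr hy⟩
  · rintro idx hidx
    simp only [coe_filter, mem_univ, true_and, Set.mem_ofPred_eq] at hidx
    rw [← hidx.1]
    exact Fin.cons_self_tail idx
  · intro y _
    exact Fin.tail_cons _ _

end idxMultiset

section uniform

variable {R : Type*} [Field R] {n m : ℕ} {E : Finset (Finset (Fin n))}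

lemma adjEntry_of_uniform (hunif : ∀ e ∈ E, e.card = m + 1) (idx : Fin (m + 1) → Fin n) :
    adjEntry (m + 1) E idx
      = ∑ e ∈ E, if idxMultiset idx = e.val then 1 / (m.factorial : R) else 0 := by
  refine sum_congr rfl fun e he => ?_
  simp [hunif e he]

lemma mul_tApply_adjEntry_of_uniform [CharZero R] (hunif : ∀ e ∈ E, e.card = m + 1)
    (x : Fin n → R) (i : Fin n) :
    x i * tApply (m + 1) (adjEntry (m + 1) E) x i = ∑ e ∈ E with i ∈ e, ∏ v ∈ e, x v := by
  have hterm : ∀ idx : Fin (m + 1) → Fin n,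
      x i * (if idx 0 = i then adjEntry (m + 1) E idx * ∏ j ∈ univ.erase 0, x (idx j) else 0)
        = ∑ e ∈ E, if idx 0 = i ∧ idxMultiset idx = e.val
            then 1 / (m.factorial : R) * ∏ v ∈ e, x v else 0 := by
    intro idx
    split_ifs with h0
    · rw [adjEntry_of_uniform hunif, mul_left_comm, ← h0,
        mul_prod_erase univ (fun j => x (idx j)) (mem_univ 0), sum_mul]
      refine sum_congr rfl fun e _ => ?_
      simp only [true_and]
      split_ifs with hM
      · rw [prod_comp_eq_prod_of_idxMultiset_eq hM]
      · rw [zero_mul]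
    · simp [h0]
  have hcount : ∀ e ∈ E, (∑ idx : Fin (m + 1) → Fin n, if idx 0 = i ∧ idxMultiset idx = e.val
      then 1 / (m.factorial : R) * ∏ v ∈ e, x v else 0) = if i ∈ e then ∏ v ∈ e, x v else 0 := by
    intro e he
    rw [← sum_filter, sum_const, nsmul_eq_mul]
    split_ifs with hi
    · rw [card_filter_head_idxMultiset_eq (hunif e he) hi, ← mul_assoc,
        mul_one_div_cancel (Nat.cast_ne_zero.mpr m.factorial_ne_zero), one_mul]
    · rw [filter_false_of_mem fun idx _ (h : idx 0 = i ∧ _) =>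
        hi (h.1 ▸ mem_of_idxMultiset_eq h.2 0)]
      simp
  rw [tApply, mul_sum, sum_congr rfl fun idx _ => hterm idx, sum_comm, sum_congr rfl hcount,
    sum_filter]

end uniform

lemma exists_edge_pow_le_prod_deg {n k : ℕ} {E : Finset (Finset (Fin n))}
    (hunif : ∀ e ∈ E, e.card = k) (hE : E.Nonempty) {x : Fin n → ℝ} (hx : ∀ i, 0 < x i)
    {ρ : ℝ} (hρ : 0 ≤ ρ) (heig : ∀ i, ρ * x i ^ k = ∑ e ∈ E with i ∈ e, ∏ v ∈ e, x v) :
    ∃ e ∈ E, ρ ^ k ≤ ∏ v ∈ e, (deg E v : ℝ) := by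
  obtain ⟨e, he, hmax⟩ := exists_max_image E (fun e => ∏ v ∈ e, x v) hE
  refine ⟨e, he, ?_⟩
  set P := ∏ v ∈ e, x v
  have hvertex : ∀ i ∈ e, ρ * x i ^ k ≤ deg E i * P := fun i _ => by
    rw [heig i, deg, ← nsmul_eq_mul]
    exact sum_le_card_nsmul _ _ _ fun f hf => hmax f (mem_filter.mp hf).1
  have hedge : ρ ^ k * P ^ k ≤ (∏ v ∈ e, (deg E v : ℝ)) * P ^ k := by
    have := prod_le_prod (fun i _ => mul_nonneg hρ (pow_nonneg (hx i).le k)) hvertex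
    rwa [prod_mul_distrib, prod_mul_distrib, prod_const, prod_const, prod_pow, hunif e he]
      at this
  exact le_of_mul_le_mul_right hedge (pow_pos (prod_pos fun v _ => hx v) k)

theorem stmt7_general {n k : ℕ} [NeZero k] (E : Finset (Finset (Fin n)))
    (hunif : ∀ e ∈ E, e.card = k) (hrank : HasRank E k)
    (x : Fin n → ℝ) (hx : ∀ i, 0 < x i)
    (heig : ∀ i, tApply k (adjEntry k E) x i = specRad k (adjEntry k E) * x i ^ (k - 1)) :
    ∃ e ∈ E, specRad k (adjEntry k E) ≤ (∏ v ∈ e, (deg E v : ℝ)) ^ (1 / (k : ℝ)) := by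
  set ρ := specRad k (adjEntry k E)
  obtain ⟨e₀, he₀, -⟩ := hrank.2
  rcases le_or_gt ρ 0 with hρ | hρ
  · exact ⟨e₀, he₀, hρ.trans (by positivity)⟩
  obtain ⟨m, rfl⟩ := Nat.exists_eq_succ_of_ne_zero (NeZero.ne k)
  have heig' : ∀ i, ρ * x i ^ (m + 1) = ∑ e ∈ E with i ∈ e, ∏ v ∈ e, x v := fun i => by
    rw [← mul_tApply_adjEntry_of_uniform hunif, heig i, Nat.succ_sub_one, pow_succ]
    ring
  obtain ⟨e, he, hle⟩ := exists_edge_pow_le_prod_deg hunif ⟨e₀, he₀⟩ hx hρ.le heig'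
  refine ⟨e, he, ?_⟩
  rw [one_div]
  calc ρ = (ρ ^ (m + 1)) ^ ((m + 1 : ℕ) : ℝ)⁻¹ :=
        (Real.pow_rpow_inv_natCast hρ.le m.succ_ne_zero).symm
    _ ≤ _ := Real.rpow_le_rpow (by positivity) hle (by positivity)

/-- for a connected `k`-uniform hypergraph with positive Perron vector,
`ρ(A_H) ≤ max_{e ∈ E(H)} (∏_{v∈e} d_v)^{1/k}`. -/
theorem stmt7 {n k : ℕ} [NeZero k] (E : Finset (Finset (Fin n)))
    (hunif : ∀ e ∈ E, e.card = k) (hconn : Conn E) (hrank : HasRank E k)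
    (x : Fin n → ℝ) (hx : ∀ i, 0 < x i)
    (heig : ∀ i, tApply k (adjEntry k E) x i = specRad k (adjEntry k E) * x i ^ (k - 1)) :
    ∃ e ∈ E, specRad k (adjEntry k E) ≤ (∏ v ∈ e, (deg E v : ℝ)) ^ (1 / (k : ℝ)) :=
  stmt7_general E hunif hrank x hx heig
end

section
/- Let G be a connected hypergraph with even rank k that is odd-bipartite with bipartition V(G) = V1 ∪ V2. Define the diagonal ±1 matrix P with P_{uu} = -1 for u ∈ V1 and P_{uu} = 1 otherwise. Then the adjacency tensor satisfies A_G = -P^{-(k-1)} A_G P; consequently A_G and -A_G have the same spectrum. -/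
open Finset

/-- `lam` is an eigenvalue of the order-`k` tensor `A` (over `ℂ`). -/
def IsEig {n : ℕ} (k : ℕ) [NeZero k] (A : (Fin k → Fin n) → ℂ) (lam : ℂ) : Prop :=
  ∃ x : Fin n → ℂ, x ≠ 0 ∧ ∀ i, tApply k A x i = lam * x i ^ (k - 1)

/- ### auxiliary lemmas -/


lemma my_countP_replicate {α : Type*} (p : α → Prop) [DecidablePred p] (m : ℕ) (a : α) :
    Multiset.countP p (Multiset.replicate m a) = if p a then m else 0 := by
  induction m with
  | zero => simp
  | succ m ih =>
    rw [Multiset.replicate_succ, Multiset.countP_cons, ih]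
    split_ifs <;> omega

lemma my_prod_map {R : Type*} [CommRing R] {n : ℕ} (V1 : Finset (Fin n))
    (m : Multiset (Fin n)) :
    (m.map (fun i => if i ∈ V1 then (-1 : R) else 1)).prod
      = (-1 : R) ^ (m.countP (· ∈ V1)) := by
  induction m using Multiset.induction with
  | empty => simp
  | cons a s ih =>
    rw [Multiset.map_cons, Multiset.prod_cons, ih, Multiset.countP_cons]
    split_ifs <;> simp [pow_add, pow_succ]

lemma my_countP_edge {n : ℕ} (V1 : Finset (Fin n)) (e : Finset (Fin n)) :
    Multiset.countP (· ∈ V1) e.val = (e ∩ V1).card := by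
  rw [← Finset.filter_mem_eq_inter, Multiset.countP_eq_card_filter, Finset.card_def,
    Finset.filter_val]

/-- key parity fact: for any idx with a nonzero entry pattern, the product of signs is -1 -/
lemma my_prod_idx {R : Type*} [CommRing R] {n k : ℕ} (V1 : Finset (Fin n))
    (idx : Fin k → Fin n) :
    (∏ j, if idx j ∈ V1 then (-1 : R) else 1)
      = (-1 : R) ^ ((idxMultiset idx).countP (· ∈ V1)) := by
  rw [← my_prod_map, idxMultiset]
  rw [Multiset.map_coe, Multiset.prod_coe, List.map_ofFn, List.prod_ofFn]
  rfl

lemma key_sign {R : Type*} [Field R] {n k : ℕ} (E : Finset (Finset (Fin n)))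
    (V1 : Finset (Fin n))
    (hodd : ∀ e ∈ E, Odd (e ∩ V1).card ∧ Odd (e \ V1).card) (hk : Even k)
    (idx : Fin k → Fin n) :
    adjEntry (R := R) k E idx
      = (-(∏ j, if idx j ∈ V1 then (-1 : R) else 1)) * adjEntry k E idx := by
  unfold adjEntry
  rw [Finset.mul_sum]
  refine Finset.sum_congr rfl fun e he => ?_
  have hecard : Even e.card := by
    have h1 := (hodd e he).1
    have h2 := (hodd e he).2
    have := Finset.card_inter_add_card_sdiff e V1
    rw [← this]
    exact h1.add_odd h2
  split_ifs with h1 h2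
  · -- full edge
    have : (∏ j, if idx j ∈ V1 then (-1 : R) else 1) = -1 := by
      rw [my_prod_idx, h1.2, my_countP_edge, Odd.neg_one_pow (hodd e he).1]
    rw [this]; ring
  · obtain ⟨m, hm, hmeq⟩ := h2.2
    have : (∏ j, if idx j ∈ V1 then (-1 : R) else 1) = -1 := by
      rw [my_prod_idx, hmeq, Multiset.countP_add, my_countP_edge,
        my_countP_replicate]
      have heven : Even (k - e.card) := by
        rcases hk with ⟨a, ha⟩; rcases hecard with ⟨b, hb⟩
        have : e.card ≤ k := le_of_lt h2.1
        exact ⟨a - b, by omega⟩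
      have hoddtot : Odd ((e ∩ V1).card + if m ∈ V1 then k - e.card else 0) := by
        have := (hodd e he).1
        split_ifs
        · exact this.add_even heven
        · simpa using this
      rw [Odd.neg_one_pow hoddtot]
    rw [this]; ring
  · ring

lemma eig_flip {n k : ℕ} [NeZero k] (hk1 : Odd (k - 1)) (eps : Fin n → ℂ)
    (heps : ∀ i, eps i = 1 ∨ eps i = -1)
    (A : (Fin k → Fin n) → ℂ)
    (hA : ∀ idx, A idx = (-(∏ j, eps (idx j))) * A idx)
    (lam : ℂ) : IsEig k A lam → IsEig k (fun idx => -A idx) lam := by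
  rintro ⟨x, hx0, hx⟩
  have hne : ∀ i, eps i ≠ 0 := fun i => by
    rcases heps i with h | h <;> rw [h] <;> norm_num
  refine ⟨fun i => eps i * x i, ?_, ?_⟩
  · intro h
    apply hx0
    funext i
    have := congrFun h i
    simp only [Pi.zero_apply, mul_eq_zero] at this
    rcases this with h' | h'
    · exact absurd h' (hne i)
    · exact h'
  · intro i
    have hsq : ∀ j, eps j * eps j = 1 := fun j => by
      rcases heps j with h | h <;> rw [h] <;> ring
    have hpow : ∀ j, eps j ^ (k - 1) = eps j := fun j => by
      rcases heps j with h | h <;> rw [h]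
      · simp
      · exact hk1.neg_one_pow
    have key : ∀ idx : Fin k → Fin n,
        (-A idx) * ∏ j ∈ univ.erase 0, eps (idx j) = eps (idx 0) * A idx := by
      intro idx
      have h1 : (∏ j, eps (idx j)) = eps (idx 0) * ∏ j ∈ univ.erase 0, eps (idx j) :=
        (Finset.mul_prod_erase univ _ (mem_univ 0)).symm
      have h2 : (∏ j ∈ univ.erase 0, eps (idx j)) * (∏ j ∈ univ.erase 0, eps (idx j)) = 1 := by
        rw [← Finset.prod_mul_distrib]
        exact Finset.prod_eq_one fun j _ => hsq _
      have h3 : -A idx = (∏ j, eps (idx j)) * A idx := by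
        linear_combination -(hA idx)
      rw [h3, h1]
      linear_combination (eps (idx 0) * A idx) * h2
    have step : tApply k (fun idx => -A idx) (fun j => eps j * x j) i
        = eps i * tApply k A x i := by
      unfold tApply
      rw [Finset.mul_sum]
      refine Finset.sum_congr rfl fun idx _ => ?_
      split_ifs with h
      · rw [Finset.prod_mul_distrib]
        have := key idx
        rw [h] at this
        linear_combination (∏ j ∈ univ.erase 0, x (idx j)) * this
      · simp
    rw [step, hx i, mul_pow, hpow]
    ring


/-- if `G` is odd-bipartite with parts `V1, V2`, and `P` is the diagonal
`±1` matrix with `-1` on `V1`, then `A_G = -P^{-(k-1)} A_G P` entrywise, and `A_G`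
and `-A_G` have the same spectrum. -/
theorem stmt9 {n k : ℕ} [NeZero k] (E : Finset (Finset (Fin n)))
    (hE : ∀ e ∈ E, e.Nonempty) (hconn : Conn E) (hrank : HasRank E k)
    (V1 : Finset (Fin n))
    (hodd : ∀ e ∈ E, Odd (e ∩ V1).card ∧ Odd (e \ V1).card) :
    (∀ idx : Fin k → Fin n,
      (adjEntry k E idx : ℝ) =
        -((if idx 0 ∈ V1 then (-1 : ℝ) else 1)⁻¹ ^ (k - 1)) *
          adjEntry k E idx *
          ∏ j ∈ Finset.univ.erase (0 : Fin k), (if idx j ∈ V1 then (-1 : ℝ) else 1)) ∧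
    (∀ lam : ℂ, IsEig k (fun idx => (adjEntry k E idx : ℂ)) lam ↔
      IsEig k (fun idx => -(adjEntry k E idx : ℂ)) lam) := by
  obtain ⟨hle, e0, he0, he0k⟩ := hrank
  have hkeven : Even k := by
    rw [← he0k, ← Finset.card_inter_add_card_sdiff e0 V1]
    exact (hodd e0 he0).1.add_odd (hodd e0 he0).2
  have hk1 : Odd (k - 1) := by
    have hk0 : k ≠ 0 := NeZero.ne k
    exact Nat.Even.sub_odd (by omega) hkeven (by norm_num)
  constructor
  · intro idx
    have hks := key_sign (R := ℝ) E V1 hodd hkeven idx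
    rw [← Finset.mul_prod_erase univ _ (mem_univ (0 : Fin k))] at hks
    have he : (if idx 0 ∈ V1 then (-1 : ℝ) else 1)⁻¹ ^ (k - 1)
        = (if idx 0 ∈ V1 then (-1 : ℝ) else 1) := by
      split_ifs <;> simp [inv_neg, hk1.neg_one_pow]
    rw [he]
    linear_combination hks
  · intro lam
    set eps : Fin n → ℂ := fun i => if i ∈ V1 then -1 else 1 with heps_def
    have heps : ∀ i, eps i = 1 ∨ eps i = -1 := fun i => by
      simp only [heps_def]; split_ifs <;> simp
    have hA : ∀ idx : Fin k → Fin n,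
        (adjEntry k E idx : ℂ) = (-(∏ j, eps (idx j))) * adjEntry k E idx := fun idx =>
      key_sign (R := ℂ) E V1 hodd hkeven idx
    constructor
    · exact eig_flip hk1 eps heps _ hA lam
    · intro h
      have hA' : ∀ idx : Fin k → Fin n,
          -(adjEntry k E idx : ℂ) = (-(∏ j, eps (idx j))) * -(adjEntry k E idx) := fun idx => by
        linear_combination -(hA idx)
      have := eig_flip hk1 eps heps (fun idx => -(adjEntry k E idx : ℂ)) hA' lam h
      have heq : (fun idx : Fin k → Fin n => -(-(adjEntry k E idx : ℂ)))
          = fun idx => (adjEntry k E idx : ℂ) := by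
        funext idx; ring
      rwa [heq] at this
end

section
/- Let G be a connected hypergraph with rank k and adjacency tensor A_G. Suppose there is a real diagonal matrix P = diag(x_1,…,x_n) with |x_1| = ⋯ = |x_n| = 1 such that A_G = -P^{-(k-1)} A_G P. Then k is even, and for every nonzero entry (A_G)_{i1…ik} ≠ 0 one has x_{i1} x_{i2} ⋯ x_{ik} = -1; consequently, setting V1 = {u : x_u = -1}, every edge of G contains an odd number of vertices of V1, i.e., G is odd-bipartite. -/
open Finset

/- ### Auxiliary lemmas -/

lemma ofFn_exists {α : Type*} (l : List α) (k : ℕ) (h : l.length = k) :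
    ∃ idx : Fin k → α, List.ofFn idx = l := by
  subst h; exact ⟨l.get, List.ofFn_get l⟩

/-- Any multiset of size `k` containing `i` is realized by an index tuple starting at `i`. -/
lemma exists_idx {n k : ℕ} [NeZero k] (m : Multiset (Fin n)) (i : Fin n)
    (him : i ∈ m) (hcard : Multiset.card m = k) :
    ∃ idx : Fin k → Fin n, idx 0 = i ∧ idxMultiset idx = m := by
  set l : List (Fin n) := i :: (m.erase i).toList with hldef
  have hl : (l : Multiset (Fin n)) = m := by
    rw [hldef, ← Multiset.cons_coe, Multiset.coe_toList, Multiset.cons_erase him]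
  have hlen : l.length = k := by
    have := congrArg Multiset.card hl
    simpa using this.trans hcard
  obtain ⟨idx, hidx⟩ := ofFn_exists l k hlen
  have hk : 0 < k := Nat.pos_of_ne_zero (NeZero.ne k)
  refine ⟨idx, ?_, ?_⟩
  · have h0 := congrArg (fun t : List (Fin n) => t[0]?) hidx
    simp only [List.getElem?_ofFn, hldef] at h0
    simp only [List.ofFnNthVal, hk, dif_pos, List.getElem?_cons_zero] at h0
    rw [show (⟨0, hk⟩ : Fin k) = 0 from Fin.ext (by simp)] at h0
    exact Option.some_injective _ h0
  · simp [idxMultiset, hidx, hl]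

lemma prod_idx {n k : ℕ} (idx : Fin k → Fin n) (x : Fin n → ℝ) :
    ∏ j, x (idx j) = ((idxMultiset idx).map x).prod := by
  simp [idxMultiset, List.map_ofFn, List.prod_ofFn, Function.comp]

lemma adjEntry_pos {n k : ℕ} (E : Finset (Finset (Fin n))) (e : Finset (Fin n))
    (he : e ∈ E) (idx : Fin k → Fin n)
    (hmatch : (e.card = k ∧ idxMultiset idx = e.val) ∨
      (e.card < k ∧ ∃ j ∈ e, idxMultiset idx = e.val + Multiset.replicate (k - e.card) j)) :
    (0 : ℝ) < adjEntry k E idx := by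
  unfold adjEntry
  apply Finset.sum_pos'
  · intro f _
    have h1 : (0:ℝ) ≤ 1 / (Nat.factorial (k - 1) : ℝ) := by positivity
    have h2 : (0:ℝ) ≤ (Nat.factorial (k - f.card + 1) : ℝ) / (Nat.factorial k : ℝ) := by
      positivity
    split_ifs <;> simp [h1, h2]
  · refine ⟨e, he, ?_⟩
    rcases hmatch with h | h
    · rw [if_pos h]
      have h1 : (0:ℝ) < (Nat.factorial (k - 1) : ℝ) := by
        exact_mod_cast Nat.factorial_pos _
      positivity
    · rw [if_neg (fun hc => absurd hc.1 (Nat.ne_of_lt h.1)), if_pos h]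
      have h1 : (0:ℝ) < (Nat.factorial (k - e.card + 1) : ℝ) := by
        exact_mod_cast Nat.factorial_pos _
      have h2 : (0:ℝ) < (Nat.factorial k : ℝ) := by exact_mod_cast Nat.factorial_pos _
      positivity

lemma alg_rel (a P x0 : ℝ) (k : ℕ) (hk : k ≠ 0) (hx0 : x0 = 1 ∨ x0 = -1)
    (ha : a ≠ 0) (h : a = -(x0⁻¹ ^ (k - 1)) * a * P) : x0 * P = -(x0 ^ k) := by
  have hinv : x0⁻¹ = x0 := by rcases hx0 with h'|h' <;> rw [h'] <;> norm_num
  rw [hinv] at h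
  have hsq2 : x0 ^ 2 = 1 := by rcases hx0 with h'|h' <;> rw [h'] <;> norm_num
  have hsq : (x0 ^ (k - 1)) ^ 2 = 1 := by
    calc (x0 ^ (k - 1)) ^ 2 = (x0 ^ 2) ^ (k - 1) := by ring
    _ = 1 := by rw [hsq2, one_pow]
  have h1 : (1 : ℝ) = -(x0 ^ (k - 1)) * P := by
    apply mul_left_cancel₀ ha
    linear_combination h
  have hP : P = -(x0 ^ (k - 1)) := by
    linear_combination (x0 ^ (k - 1)) * h1 + (-P) * hsq
  have hk1 : k - 1 + 1 = k := Nat.succ_pred_eq_of_pos (Nat.pos_of_ne_zero hk)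
  rw [hP]
  calc x0 * -(x0 ^ (k - 1)) = -(x0 ^ (k - 1) * x0) := by ring
  _ = -(x0 ^ (k - 1 + 1)) := by rw [pow_succ]
  _ = -(x0 ^ k) := by rw [hk1]

lemma prod_neg_one {n : ℕ} (x : Fin n → ℝ) (e : Finset (Fin n))
    (hp : ∀ i ∈ e, x i = 1 ∨ x i = -1) (h : e.prod x = -1) :
    Odd (e.filter (fun u => x u = -1)).card := by
  have key : e.prod x = (-1 : ℝ) ^ (e.filter (fun u => x u = -1)).card := by
    rw [← Finset.prod_filter_mul_prod_filter_not e (fun u => x u = -1)]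
    have h1 : ∏ u ∈ e.filter (fun u => x u = -1), x u
        = (-1 : ℝ) ^ (e.filter (fun u => x u = -1)).card := by
      rw [Finset.prod_congr rfl (fun u hu => (Finset.mem_filter.mp hu).2),
        Finset.prod_const]
    have h2 : ∏ u ∈ e.filter (fun u => ¬ x u = -1), x u = 1 := by
      apply Finset.prod_eq_one
      intro u hu
      rcases hp u (Finset.mem_filter.mp hu).1 with h'|h'
      · exact h'
      · exact absurd h' (Finset.mem_filter.mp hu).2
    rw [h1, h2, mul_one]
  rw [h] at key
  rcases Nat.even_or_odd (e.filter (fun u => x u = -1)).card with hev | hod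
  · rw [hev.neg_one_pow] at key; norm_num at key
  · exact hod

/-- if `A_G = -P^{-(k-1)} A_G P` for a real diagonal `P = diag(x)` with
`|xᵢ| = 1`, then `k` is even, every nonzero entry position satisfies
`x_{i₁}⋯x_{i_k} = -1`, and with `V1 = {u : x_u = -1}` every edge meets `V1` in an odd
number of vertices (and has even cardinality), i.e. `G` is odd-bipartite. -/
theorem stmt10 {n k : ℕ} [NeZero k] (E : Finset (Finset (Fin n)))
    (hE : ∀ e ∈ E, e.Nonempty) (hconn : Conn E) (hrank : HasRank E k)
    (x : Fin n → ℝ) (hx : ∀ i, |x i| = 1)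
    (hsim : ∀ idx : Fin k → Fin n,
      (adjEntry k E idx : ℝ) =
        -((x (idx 0))⁻¹ ^ (k - 1)) * adjEntry k E idx *
          ∏ j ∈ Finset.univ.erase (0 : Fin k), x (idx j)) :
    Even k ∧
    (∀ idx : Fin k → Fin n, (adjEntry k E idx : ℝ) ≠ 0 → ∏ j, x (idx j) = -1) ∧
    (∀ e ∈ E, Odd (e.filter (fun u => x u = -1)).card ∧ Even e.card) := by
  have pm : ∀ i, x i = 1 ∨ x i = -1 := fun i => (abs_eq (by norm_num)).mp (hx i)
  have sq1 : ∀ i, x i ^ 2 = 1 := fun i => by rcases pm i with h|h <;> rw [h] <;> norm_num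
  have oddpow : ∀ (m : ℕ) (i : Fin n), Odd m → x i ^ m = x i := by
    intro m i hm
    rcases pm i with h|h <;> rw [h]
    · exact one_pow m
    · exact hm.neg_one_pow
  have evenpow : ∀ (m : ℕ) (i : Fin n), Even m → x i ^ m = 1 := by
    intro m i hm
    rcases pm i with h|h <;> rw [h]
    · exact one_pow m
    · exact hm.neg_one_pow
  -- the basic relation from the similarity equation at a nonzero entry
  have entry_rel : ∀ idx : Fin k → Fin n, adjEntry k E idx ≠ (0:ℝ) →
      ∏ j, x (idx j) = -(x (idx 0) ^ k) := by
    intro idx hne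
    have h := alg_rel (adjEntry k E idx)
      (∏ j ∈ Finset.univ.erase (0 : Fin k), x (idx j)) (x (idx 0)) k
      (NeZero.ne k) (pm _) hne (hsim idx)
    rw [← Finset.mul_prod_erase Finset.univ (fun j => x (idx j))
      (Finset.mem_univ (0 : Fin k))]
    exact h
  -- relation for full-size edges
  have relA : ∀ e ∈ E, e.card = k → ∀ i ∈ e, e.prod x = -(x i ^ k) := by
    intro e he hc i hi
    obtain ⟨idx, h0, hm⟩ := exists_idx e.val i (Finset.mem_val.mpr hi) hc
    have hpos := adjEntry_pos E e he idx (Or.inl ⟨hc, hm⟩)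
    have h := entry_rel idx (ne_of_gt hpos)
    rw [prod_idx, hm, h0] at h
    exact h
  -- relation for smaller edges
  have relB : ∀ e ∈ E, e.card < k → ∀ i ∈ e, ∀ j ∈ e,
      e.prod x * x j ^ (k - e.card) = -(x i ^ k) := by
    intro e he hc i hi j hj
    have hm_card : Multiset.card (e.val + Multiset.replicate (k - e.card) j) = k := by
      simp only [Multiset.card_add, Multiset.card_replicate]
      have : Multiset.card e.val = e.card := rfl
      omega
    obtain ⟨idx, h0, hm⟩ := exists_idx (e.val + Multiset.replicate (k - e.card) j) i
      (Multiset.mem_add.mpr (Or.inl (Finset.mem_val.mpr hi))) hm_card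
    have hpos := adjEntry_pos E e he idx (Or.inr ⟨hc, j, hj, hm⟩)
    have h := entry_rel idx (ne_of_gt hpos)
    rw [prod_idx, hm, h0] at h
    rw [Multiset.map_add, Multiset.prod_add, Multiset.map_replicate,
      Multiset.prod_replicate] at h
    exact h
  -- Part 1: k is even
  have hEven : Even k := by
    by_contra hodd
    rw [Nat.not_even_iff_odd] at hodd
    obtain ⟨e, he, hcard⟩ := hrank.2
    obtain ⟨i0, hi0⟩ := hE e he
    have hall : ∀ i ∈ e, x i = -(e.prod x) := by
      intro i hi
      have h := relA e he hcard i hi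
      rw [oddpow k i hodd] at h
      linarith
    have hc0 := hall i0 hi0
    have hprod : e.prod x = (-(e.prod x)) ^ k := by
      calc e.prod x = ∏ _i ∈ e, -(e.prod x) := Finset.prod_congr rfl hall
      _ = (-(e.prod x)) ^ e.card := Finset.prod_const _
      _ = _ := by rw [hcard]
    rcases pm i0 with h|h
    · rw [h] at hc0
      have hp : e.prod x = -1 := by linarith
      rw [hp] at hprod
      norm_num at hprod
    · rw [h] at hc0
      have hp : e.prod x = 1 := by linarith
      rw [hp] at hprod
      rw [show -(1:ℝ) = -1 from rfl, hodd.neg_one_pow] at hprod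
      norm_num at hprod
  have hxk : ∀ i, x i ^ k = 1 := fun i => evenpow k i hEven
  -- Part 2
  have part2 : ∀ idx : Fin k → Fin n, adjEntry k E idx ≠ (0:ℝ) →
      ∏ j, x (idx j) = -1 := by
    intro idx h
    rw [entry_rel idx h, hxk]
  refine ⟨hEven, part2, ?_⟩
  -- Part 3
  intro e he
  have hle := hrank.1 e he
  obtain ⟨i0, hi0⟩ := hE e he
  rcases eq_or_lt_of_le hle with heq | hlt
  · have hprod : e.prod x = -1 := by
      have h := relA e he heq i0 hi0
      rw [hxk] at h
      exact h
    exact ⟨prod_neg_one x e (fun i _ => pm i) hprod, heq ▸ hEven⟩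
  · have hEvks : Even (k - e.card) := by
      by_contra hod
      rw [Nat.not_even_iff_odd] at hod
      have hall : ∀ j ∈ e, x j = -(e.prod x) := by
        intro j hj
        have heq := relB e he hlt j hj j hj
        rw [hxk j, oddpow _ j hod] at heq
        linear_combination x j * heq - e.prod x * (sq1 j)
      have hc0 := hall i0 hi0
      have hsodd : Odd e.card := by
        rw [Nat.odd_iff] at hod ⊢
        rw [Nat.even_iff] at hEven
        omega
      have hprod : e.prod x = (-(e.prod x)) ^ e.card := by
        calc e.prod x = ∏ _i ∈ e, -(e.prod x) := Finset.prod_congr rfl hall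
        _ = (-(e.prod x)) ^ e.card := Finset.prod_const _
      rcases pm i0 with h|h
      · rw [h] at hc0
        have hp : e.prod x = -1 := by linarith
        rw [hp] at hprod
        norm_num at hprod
      · rw [h] at hc0
        have hp : e.prod x = 1 := by linarith
        rw [hp] at hprod
        rw [show -(1:ℝ) = -1 from rfl, hsodd.neg_one_pow] at hprod
        norm_num at hprod
    have hsEven : Even e.card := by
      rw [Nat.even_iff] at hEven hEvks ⊢
      omega
    have hprodm1 : e.prod x = -1 := by
      have heq := relB e he hlt i0 hi0 i0 hi0
      rw [hxk i0, evenpow _ i0 hEvks, mul_one] at heq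
      exact heq
    exact ⟨prod_neg_one x e (fun i _ => pm i) hprodm1, hsEven⟩
end

section
/- Let G be a connected hypergraph with rank k. If G is odd-bipartite with bipartition V1 ∪ V2 and P is the diagonal ±1 matrix with -1 in positions V1, then the Laplacian and signless Laplacian tensors satisfy L_G = P^{-(k-1)} Q_G P; consequently L_G and Q_G have the same spectrum. -/
open Finset

/-- Entries of the Laplacian tensor `L = D - A`. -/
noncomputable def lapEntry {R : Type*} [Field R] {n : ℕ} (k : ℕ) [NeZero k]
    (E : Finset (Finset (Fin n))) (idx : Fin k → Fin n) : R :=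
  (if ∀ j, idx j = idx 0 then (deg E (idx 0) : R) else 0) - adjEntry k E idx

/-- Entries of the signless Laplacian tensor `Q = D + A`. -/
noncomputable def qEntry {R : Type*} [Field R] {n : ℕ} (k : ℕ) [NeZero k]
    (E : Finset (Finset (Fin n))) (idx : Fin k → Fin n) : R :=
  (if ∀ j, idx j = idx 0 then (deg E (idx 0) : R) else 0) + adjEntry k E idx

section OddBipAux

variable {R : Type*} [Field R] {n : ℕ}

/-- The diagonal sign: `-1` on `V1`, `1` elsewhere. -/
def esgn (V1 : Finset (Fin n)) (i : Fin n) : R := if i ∈ V1 then -1 else 1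

lemma esgn_mul_self (V1 : Finset (Fin n)) (i : Fin n) :
    esgn (R := R) V1 i * esgn V1 i = 1 := by
  unfold esgn; split_ifs <;> ring

lemma esgn_pow_even (V1 : Finset (Fin n)) (i : Fin n) {m : ℕ} (hm : Even m) :
    esgn (R := R) V1 i ^ m = 1 := by
  unfold esgn
  split_ifs
  · exact hm.neg_one_pow
  · exact one_pow m

lemma prod_esgn_edge (V1 : Finset (Fin n)) (e : Finset (Fin n)) (h : Odd (e ∩ V1).card) :
    (Multiset.map (esgn (R := R) V1) e.val).prod = -1 := by
  rw [← Finset.prod_eq_multiset_prod]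
  unfold esgn
  rw [Finset.prod_ite, Finset.prod_const, Finset.prod_const, one_pow, mul_one,
    Finset.filter_mem_eq_inter, h.neg_one_pow]

lemma prod_esgn_idx {k : ℕ} (V1 : Finset (Fin n)) (idx : Fin k → Fin n) :
    ∏ j, esgn (R := R) V1 (idx j) =
      (Multiset.map (esgn (R := R) V1) (idxMultiset idx)).prod := by
  simp [idxMultiset, Multiset.map_coe, List.map_ofFn, List.prod_ofFn, Function.comp]

lemma entry_rel {k : ℕ} [NeZero k] (hk : Even k) (E : Finset (Finset (Fin n)))
    (V1 : Finset (Fin n))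
    (hodd : ∀ e ∈ E, Odd (e ∩ V1).card ∧ Odd (e \ V1).card)
    (hle : ∀ e ∈ E, e.card ≤ k) (idx : Fin k → Fin n) :
    lapEntry (R := R) k E idx =
      esgn V1 (idx 0) ^ (k - 1) * qEntry k E idx *
        ∏ j ∈ Finset.univ.erase (0 : Fin k), esgn (R := R) V1 (idx j) := by
  have hcard : ∀ e ∈ E, Even e.card := by
    intro e he
    rw [← Finset.card_inter_add_card_sdiff e V1]
    exact (hodd e he).1.add_odd (hodd e he).2
  set ε : Fin n → R := esgn (R := R) V1 with hε
  set S : R := ∏ j, ε (idx j) with hSdef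
  have hsq : ∀ i, ε i * ε i = 1 := esgn_mul_self V1
  have hprod_erase : ∏ j ∈ Finset.univ.erase (0 : Fin k), ε (idx j) = ε (idx 0) * S := by
    rw [hSdef, ← Finset.mul_prod_erase Finset.univ (fun j => ε (idx j)) (Finset.mem_univ 0),
      ← mul_assoc, hsq, one_mul]
  have hpow : ε (idx 0) ^ (k - 1) * ε (idx 0) = 1 := by
    have h1 : ε (idx 0) ^ (k - 1) * ε (idx 0) = ε (idx 0) ^ k := by
      rw [← pow_succ]
      congr 1
      have := NeZero.ne k
      omega
    rw [h1, hε]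
    exact esgn_pow_even V1 _ hk
  have hS : ∀ e ∈ E, (idxMultiset idx = e.val ∨
      ∃ j ∈ e, idxMultiset idx = e.val + Multiset.replicate (k - e.card) j) → S = -1 := by
    intro e he h
    have hodd' := (hodd e he).1
    rcases h with h | ⟨j, _, h⟩
    · rw [hSdef, hε, prod_esgn_idx, h, prod_esgn_edge V1 e hodd']
    · rw [hSdef, hε, prod_esgn_idx, h, Multiset.map_add, Multiset.prod_add,
        Multiset.map_replicate, Multiset.prod_replicate, prod_esgn_edge V1 e hodd']
      have heven : Even (k - e.card) := by
        rw [Nat.even_sub (hle e he)]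
        exact ⟨fun _ => hcard e he, fun _ => hk⟩
      rw [esgn_pow_even V1 _ heven, mul_one]
  have hA : adjEntry (R := R) k E idx * S = - adjEntry (R := R) k E idx := by
    unfold adjEntry
    rw [Finset.sum_mul, ← Finset.sum_neg_distrib]
    refine Finset.sum_congr rfl fun e he => ?_
    split_ifs with h1 h2
    · rw [hS e he (Or.inl h1.2)]; ring
    · rw [hS e he (Or.inr h2.2)]; ring
    · ring
  have hD : (if ∀ j, idx j = idx 0 then ((deg E (idx 0) : R)) else 0) * S
      = (if ∀ j, idx j = idx 0 then ((deg E (idx 0) : R)) else 0) := by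
    split_ifs with h
    · have hS1 : S = 1 := by
        rw [hSdef]
        calc ∏ j, ε (idx j) = ∏ _j : Fin k, ε (idx 0) :=
              Finset.prod_congr rfl fun j _ => by rw [h j]
          _ = ε (idx 0) ^ k := by
              rw [Finset.prod_const, Finset.card_univ, Fintype.card_fin]
          _ = 1 := by rw [hε]; exact esgn_pow_even V1 _ hk
      rw [hS1, mul_one]
    · rw [zero_mul]
  unfold lapEntry qEntry
  rw [hprod_erase]
  have key : ε (idx 0) ^ (k - 1) *
      ((if ∀ j, idx j = idx 0 then (deg E (idx 0) : R) else 0) + adjEntry k E idx) *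
      (ε (idx 0) * S)
      = (ε (idx 0) ^ (k - 1) * ε (idx 0)) *
        ((if ∀ j, idx j = idx 0 then (deg E (idx 0) : R) else 0) * S
          + adjEntry k E idx * S) := by ring
  rw [key, hpow, one_mul, hA, hD]
  ring

lemma tApply_rel {k : ℕ} [NeZero k] (ε : Fin n → R)
    (A B : (Fin k → Fin n) → R)
    (hAB : ∀ idx, A idx = ε (idx 0) ^ (k - 1) * B idx *
      ∏ j ∈ Finset.univ.erase (0 : Fin k), ε (idx j))
    (x : Fin n → R) (i : Fin n) :
    tApply k A x i = ε i ^ (k - 1) * tApply k B (fun v => ε v * x v) i := by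
  unfold tApply
  rw [Finset.mul_sum]
  refine Finset.sum_congr rfl fun idx _ => ?_
  split_ifs with h
  · rw [hAB idx, h, Finset.prod_mul_distrib]
    ring
  · ring

lemma eig_transfer {k : ℕ} [NeZero k] (ε : Fin n → ℂ) (hsq : ∀ v, ε v * ε v = 1)
    (A B : (Fin k → Fin n) → ℂ)
    (hAB : ∀ idx, A idx = ε (idx 0) ^ (k - 1) * B idx *
      ∏ j ∈ Finset.univ.erase (0 : Fin k), ε (idx j))
    (lam : ℂ) (h : IsEig k A lam) : IsEig k B lam := by
  obtain ⟨x, hx, heig⟩ := h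
  have hne : ∀ v, ε v ≠ 0 := by
    intro v h0
    have h1 := hsq v
    rw [h0, zero_mul] at h1
    exact zero_ne_one h1
  refine ⟨fun v => ε v * x v, ?_, ?_⟩
  · intro h0
    apply hx
    funext v
    have h1 : ε v * x v = 0 := by
      have := congrFun h0 v; simpa using this
    rcases mul_eq_zero.mp h1 with h2 | h2
    · exact absurd h2 (hne v)
    · simpa using h2
  · intro i
    have h1 := tApply_rel ε A B hAB x i
    have hpow2 : ε i ^ (k - 1) * ε i ^ (k - 1) = 1 := by
      rw [← mul_pow, hsq, one_pow]
    have h2 : ε i ^ (k - 1) * tApply k A x i = tApply k B (fun v => ε v * x v) i := by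
      rw [h1, ← mul_assoc, hpow2, one_mul]
    show tApply k B (fun v => ε v * x v) i = lam * (ε i * x i) ^ (k - 1)
    rw [← h2, heig i, mul_pow]
    ring

end OddBipAux

/-- if `G` is odd-bipartite with parts `V1, V2` and `P` is the diagonal
`±1` matrix with `-1` on `V1`, then `L_G = P^{-(k-1)} Q_G P` entrywise, and `L_G` and
`Q_G` have the same spectrum. -/
theorem stmt11 {n k : ℕ} [NeZero k] (E : Finset (Finset (Fin n)))
    (hE : ∀ e ∈ E, e.Nonempty) (hconn : Conn E) (hrank : HasRank E k)
    (V1 : Finset (Fin n))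
    (hodd : ∀ e ∈ E, Odd (e ∩ V1).card ∧ Odd (e \ V1).card) :
    (∀ idx : Fin k → Fin n,
      (lapEntry k E idx : ℝ) =
        (if idx 0 ∈ V1 then (-1 : ℝ) else 1)⁻¹ ^ (k - 1) * qEntry k E idx *
          ∏ j ∈ Finset.univ.erase (0 : Fin k), (if idx j ∈ V1 then (-1 : ℝ) else 1)) ∧
    (∀ lam : ℂ, IsEig k (fun idx => (lapEntry k E idx : ℂ)) lam ↔
      IsEig k (fun idx => (qEntry k E idx : ℂ)) lam) := by
  obtain ⟨hle, e0, he0, hke⟩ := hrank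
  have hkeven : Even k := by
    rw [← hke, ← Finset.card_inter_add_card_sdiff e0 V1]
    exact (hodd e0 he0).1.add_odd (hodd e0 he0).2
  have hinv : ∀ i : Fin n, (if i ∈ V1 then (-1 : ℝ) else 1)⁻¹ = esgn V1 i := by
    intro i; unfold esgn; split_ifs <;> norm_num
  constructor
  · intro idx
    rw [hinv (idx 0)]
    exact entry_rel (R := ℝ) hkeven E V1 hodd hle idx
  · intro lam
    have hsq : ∀ v, esgn (R := ℂ) V1 v * esgn V1 v = 1 := esgn_mul_self V1
    have hAB : ∀ idx : Fin k → Fin n, (lapEntry k E idx : ℂ) =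
        esgn V1 (idx 0) ^ (k - 1) * qEntry k E idx *
          ∏ j ∈ Finset.univ.erase (0 : Fin k), esgn (R := ℂ) V1 (idx j) :=
      entry_rel hkeven E V1 hodd hle
    have hBA : ∀ idx : Fin k → Fin n, (qEntry k E idx : ℂ) =
        esgn V1 (idx 0) ^ (k - 1) * lapEntry k E idx *
          ∏ j ∈ Finset.univ.erase (0 : Fin k), esgn (R := ℂ) V1 (idx j) := by
      intro idx
      have hP : (∏ j ∈ Finset.univ.erase (0 : Fin k), esgn (R := ℂ) V1 (idx j)) *
          (∏ j ∈ Finset.univ.erase (0 : Fin k), esgn (R := ℂ) V1 (idx j)) = 1 := by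
        rw [← Finset.prod_mul_distrib]
        exact Finset.prod_eq_one fun j _ => hsq _
      have hE2 : esgn (R := ℂ) V1 (idx 0) ^ (k - 1) * esgn V1 (idx 0) ^ (k - 1) = 1 := by
        rw [← mul_pow, hsq, one_pow]
      rw [hAB idx]
      refine Eq.symm ?_
      calc esgn (R := ℂ) V1 (idx 0) ^ (k - 1) *
            (esgn V1 (idx 0) ^ (k - 1) * qEntry k E idx *
              ∏ j ∈ Finset.univ.erase (0 : Fin k), esgn (R := ℂ) V1 (idx j)) *
            ∏ j ∈ Finset.univ.erase (0 : Fin k), esgn (R := ℂ) V1 (idx j)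
          = (esgn (R := ℂ) V1 (idx 0) ^ (k - 1) * esgn V1 (idx 0) ^ (k - 1)) *
            qEntry k E idx *
            ((∏ j ∈ Finset.univ.erase (0 : Fin k), esgn (R := ℂ) V1 (idx j)) *
              (∏ j ∈ Finset.univ.erase (0 : Fin k), esgn (R := ℂ) V1 (idx j))) := by ring
        _ = qEntry k E idx := by rw [hE2, hP]; ring
    constructor
    · exact eig_transfer (esgn V1) hsq _ _ hAB lam
    · exact eig_transfer (esgn V1) hsq _ _ hBA lam
end
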